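/- arXiv:math/0701713 — 4 statements merged into one kernel-verified Lean document; each statement's English description precedes it below -/
import Mathlib

section
/- Let ⟨s,t,f⟩ be a linear identity of length 2n such that f(1) = 1 (the leftmost variable is the same on both sides) or f(n) = n (the rightmost variable is the same on both sides). Let F₂ be the free groupoid on two generators satisfying ⟨s,t,f⟩, i.e., the quotient of FreeMagma(Fin 2) by the smallest multiplicative congruence containing all substitution instances of the identity ⟨s,t,f⟩. Then for every m ≥ 3, F₂ is not mAC-nice; in particular F₂ is not ultimately AC-nice, hence the identity ⟨s,t,f⟩ is not ultimately AC-nice. -/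
/-- Bracketings: full binary trees in which every internal node has two children. -/
inductive Brack : Type
  | leaf : Brack
  | node : Brack → Brack → Brack

/-- Number of leaves of a bracketing. -/
def Brack.leaves : Brack → ℕ
  | .leaf => 1
  | .node l r => l.leaves + r.leaves

/-- The `s`-product in a magma `G`: evaluate the bracketing `s`, labelling its leaves
from left to right by `a k, a (k+1), …`. -/
def Brack.eval {G : Type*} [Mul G] : Brack → (ℕ → G) → ℕ → G
  | .leaf, a, k => a k
  | .node l r, a, k => l.eval a k * r.eval a (k + l.leaves)

/-- Extend a permutation of `{0, …, n−1}` to `ℕ` (identity elsewhere). -/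
def permNat {n : ℕ} (f : Equiv.Perm (Fin n)) (i : ℕ) : ℕ :=
  if h : i < n then (f ⟨i, h⟩ : ℕ) else i

/-- A magma `G` satisfies the linear identity `⟨s, t, f⟩` if for all `a₁, …, aₙ ∈ G`
the `s`-product of `(a₁, …, aₙ)` equals the `t`-product of `(a_{f(1)}, …, a_{f(n)})`. -/
def Satisfies (G : Type*) [Mul G] {n : ℕ} (s t : Brack) (f : Equiv.Perm (Fin n)) : Prop :=
  ∀ a : ℕ → G, s.eval a 0 = t.eval (fun i => a (permNat f i)) 0

/-- A magma `G` is `m`AC-nice if any two products of the same `m` elements coincide: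
for every `a`, all bracketings `s, t` with `m` leaves and all permutations `f, g`,
the `s`-product of `(a_{f(1)}, …, a_{f(m)})` equals the `t`-product of
`(a_{g(1)}, …, a_{g(m)})`. -/
def ACnice (G : Type*) [Mul G] (m : ℕ) : Prop :=
  ∀ (a : ℕ → G) (s t : Brack), s.leaves = m → t.leaves = m →
    ∀ f g : Equiv.Perm (Fin m),
      s.eval (fun i => a (permNat f i)) 0 = t.eval (fun i => a (permNat g i)) 0

/-- Substitution instances of the linear identity `⟨s,t,f⟩` in the free magma on two
generators: pairs obtained by substituting arbitrary terms for the variables. -/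
def instRel {n : ℕ} (s t : Brack) (f : Equiv.Perm (Fin n))
    (x y : FreeMagma (Fin 2)) : Prop :=
  ∃ a : ℕ → FreeMagma (Fin 2),
    x = s.eval a 0 ∧ y = t.eval (fun i => a (permNat f i)) 0

/-! In a left-zero magma every product equals its leftmost factor, and in a right-zero magma
its rightmost one. Such a magma therefore satisfies every linear identity that keeps the
leftmost (resp. rightmost) variable in place, and the free groupoid `F₂` maps onto the
two-element one. But if every product of `m ≥ 2` factors is the factor in a fixed position,
swapping that factor with a different one changes the product, so the magma is not
`m`AC-nice; and `m`AC-niceness passes to surjective images. -/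

lemma Brack.exists_leaves_eq {m : ℕ} (hm : 0 < m) : ∃ b : Brack, b.leaves = m := by
  induction m, hm using Nat.le_induction with
  | base => exact ⟨.leaf, rfl⟩
  | succ m _ ih =>
    obtain ⟨b, hb⟩ := ih
    exact ⟨.node .leaf b, by simp [Brack.leaves, hb, Nat.add_comm]⟩

lemma Brack.map_eval {G M : Type*} [Mul G] [Mul M] (φ : G →ₙ* M) (b : Brack) (a : ℕ → G)
    (k : ℕ) : φ (b.eval a k) = b.eval (fun i => φ (a i)) k := by
  induction b generalizing k with
  | leaf => rfl
  | node l r ihl ihr => simp only [Brack.eval, map_mul, ihl, ihr]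

lemma permNat_of_lt {n i : ℕ} (f : Equiv.Perm (Fin n)) (h : i < n) :
    permNat f i = f ⟨i, h⟩ :=
  dif_pos h

@[simp] lemma permNat_one {n : ℕ} (i : ℕ) : permNat (1 : Equiv.Perm (Fin n)) i = i := by
  unfold permNat
  split <;> rfl

lemma ACnice.of_surjective {G M : Type*} [Mul G] [Mul M] {m : ℕ} (φ : G →ₙ* M)
    (hφ : Function.Surjective φ) (h : ACnice G m) : ACnice M m := by
  intro a s t hs ht f g
  obtain ⟨a', rfl⟩ : ∃ a', φ ∘ a' = a := hφ.comp_left a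
  simpa only [Brack.map_eval, Function.comp_apply] using congrArg φ (h a' s t hs ht f g)

lemma not_ACnice_of_eval_eq_apply {G : Type*} [Mul G] [Nontrivial G] {m p : ℕ}
    (hm : 2 ≤ m) (hp : p < m) (h : ∀ (b : Brack) (a : ℕ → G), b.leaves = m → b.eval a 0 = a p) :
    ¬ACnice G m := by
  intro hAC
  obtain ⟨x, y, hxy⟩ := exists_pair_ne G
  obtain ⟨b, hb⟩ := Brack.exists_leaves_eq (by omega : 0 < m)
  have : Nontrivial (Fin m) := Fin.nontrivial_iff_two_le.mpr hm
  obtain ⟨j, hj⟩ := exists_ne (⟨p, hp⟩ : Fin m)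
  have hjp : (j : ℕ) ≠ p := fun h => hj (Fin.ext h)
  have := hAC (fun i => if i = p then x else y) b b hb hb 1 (Equiv.swap ⟨p, hp⟩ j)
  rw [h b _ hb, h b _ hb, permNat_one, permNat_of_lt _ hp, Equiv.swap_apply_left] at this
  simp [hjp, hxy] at this

def LeftZero (α : Type*) := α

instance {α : Type*} : Mul (LeftZero α) := ⟨fun x _ => x⟩

instance {α : Type*} [Nontrivial α] : Nontrivial (LeftZero α) := inferInstanceAs (Nontrivial α)

def RightZero (α : Type*) := α

instance {α : Type*} : Mul (RightZero α) := ⟨fun _ y => y⟩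

instance {α : Type*} [Nontrivial α] : Nontrivial (RightZero α) := inferInstanceAs (Nontrivial α)

lemma LeftZero.eval {α : Type*} (b : Brack) (a : ℕ → LeftZero α) (k : ℕ) :
    b.eval a k = a k := by
  induction b generalizing k with
  | leaf => rfl
  | node l r ihl ihr => exact ihl k

lemma RightZero.eval {α : Type*} (b : Brack) (a : ℕ → RightZero α) (k : ℕ) :
    b.eval a k = a (k + b.leaves - 1) := by
  induction b generalizing k with
  | leaf => rfl
  | node l r ihl ihr =>
    show r.eval a (k + l.leaves) = _
    rw [ihr, Brack.leaves, Nat.add_assoc]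

lemma LeftZero.satisfies {α : Type*} {n : ℕ} (hn : 0 < n) {s t : Brack} {f : Equiv.Perm (Fin n)}
    (hf : f ⟨0, hn⟩ = ⟨0, hn⟩) : Satisfies (LeftZero α) s t f := by
  intro a
  rw [LeftZero.eval, LeftZero.eval, permNat_of_lt f hn, hf]

lemma RightZero.satisfies {α : Type*} {n : ℕ} (hn : 0 < n) {s t : Brack} (hs : s.leaves = n)
    (ht : t.leaves = n) {f : Equiv.Perm (Fin n)}
    (hf : f ⟨n - 1, Nat.sub_lt hn Nat.one_pos⟩ = ⟨n - 1, Nat.sub_lt hn Nat.one_pos⟩) :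
    Satisfies (RightZero α) s t f := by
  intro a
  rw [RightZero.eval, RightZero.eval, hs, ht, Nat.zero_add,
    permNat_of_lt f (Nat.sub_lt hn Nat.one_pos), hf]

lemma LeftZero.not_ACnice {α : Type*} [Nontrivial α] {m : ℕ} (hm : 2 ≤ m) :
    ¬ACnice (LeftZero α) m :=
  not_ACnice_of_eval_eq_apply hm (by omega) fun b a _ => LeftZero.eval b a 0

lemma RightZero.not_ACnice {α : Type*} [Nontrivial α] {m : ℕ} (hm : 2 ≤ m) :
    ¬ACnice (RightZero α) m :=
  not_ACnice_of_eval_eq_apply (p := m - 1) hm (by omega) fun b a hb => by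
    rw [RightZero.eval, hb, Nat.zero_add]

def Con.liftMulHom {G M : Type*} [Mul G] [Mul M] (c : Con G) (φ : G →ₙ* M)
    (h : c ≤ Con.ker φ) : c.Quotient →ₙ* M where
  toFun q := q.liftOn φ h
  map_mul' x y := Con.induction_on₂ x y (map_mul φ)

lemma Con.liftMulHom_surjective {G M : Type*} [Mul G] [Mul M] (c : Con G) (φ : G →ₙ* M)
    (h : c ≤ Con.ker φ) (hφ : Function.Surjective φ) : Function.Surjective (c.liftMulHom φ h) :=
  fun y => let ⟨x, hx⟩ := hφ y; ⟨x, hx⟩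

lemma conGen_instRel_le_ker {M : Type*} [Mul M] {n : ℕ} {s t : Brack} {f : Equiv.Perm (Fin n)}
    (hM : Satisfies M s t f) (φ : FreeMagma (Fin 2) →ₙ* M) :
    conGen (instRel s t f) ≤ Con.ker φ := by
  rw [Con.conGen_le]
  rintro x y ⟨a, rfl, rfl⟩
  show φ _ = φ _
  rw [Brack.map_eval, Brack.map_eval]
  exact hM (φ ∘ a)

lemma not_ACnice_conGen_instRel {M : Type*} [Mul M] {n m : ℕ} {s t : Brack}
    {f : Equiv.Perm (Fin n)} (hM : Satisfies M s t f) (gen : Fin 2 → M)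
    (hgen : Function.Surjective gen) (hnot : ¬ACnice M m) :
    ¬ACnice (conGen (instRel s t f)).Quotient m := by
  have hsurj : Function.Surjective (FreeMagma.lift gen) :=
    fun y => let ⟨i, hi⟩ := hgen y; ⟨FreeMagma.of i, by rw [FreeMagma.lift_of, hi]⟩
  exact fun h => hnot <| h.of_surjective _ <|
    Con.liftMulHom_surjective _ _ (conGen_instRel_le_ker hM _) hsurj

/-- Lemma 5.2: if the linear identity `⟨s,t,f⟩` of length `2n` satisfies `f(1) = 1` or
`f(n) = n`, then the free groupoid on two generators satisfying `⟨s,t,f⟩` (the quotient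
of `FreeMagma (Fin 2)` by the smallest multiplicative congruence containing all
substitution instances of the identity) is not `m`AC-nice for any `m ≥ 3`; in particular
it is not ultimately AC-nice, hence `⟨s,t,f⟩` is not an ultimately AC-nice identity. -/
theorem stmt8 (n : ℕ) (hn : 0 < n)
    (s t : Brack) (hs : s.leaves = n) (ht : t.leaves = n) (f : Equiv.Perm (Fin n))
    (hf : f ⟨0, hn⟩ = ⟨0, hn⟩ ∨
      f ⟨n - 1, Nat.sub_lt hn Nat.one_pos⟩ = ⟨n - 1, Nat.sub_lt hn Nat.one_pos⟩) :
    ∀ m : ℕ, 3 ≤ m → ¬ACnice (conGen (instRel s t f)).Quotient m := by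
  intro m hm
  rcases hf with hf | hf
  · exact not_ACnice_conGen_instRel (LeftZero.satisfies hn hf) (id : Fin 2 → LeftZero (Fin 2))
      Function.surjective_id (LeftZero.not_ACnice (by omega))
  · exact not_ACnice_conGen_instRel (RightZero.satisfies hn hs ht hf)
      (id : Fin 2 → RightZero (Fin 2)) Function.surjective_id (RightZero.not_ACnice (by omega))
end

section
/- Let G be a magma satisfying (x*y)*z = y*(z*x) for all x, y, z ∈ G, and suppose G has one-sided cancellation: either left cancellation (x*y = x*z implies y = z for all x, y, z) or right cancellation (y*x = z*x implies y = z for all x, y, z). Then G is commutative and associative: x*y = y*x and (x*y)*z = x*(y*z) for all x, y, z ∈ G. -/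
/-- Lemma 7.1 (cancellation case): a magma satisfying `(xy)z = y(zx)` that has one-sided
cancellation (left or right) is commutative and associative. -/
theorem stmt14 {G : Type*} [Mul G]
    (h : ∀ x y z : G, (x * y) * z = y * (z * x))
    (hc : (∀ x y z : G, x * y = x * z → y = z) ∨ (∀ x y z : G, y * x = z * x → y = z)) :
    (∀ x y : G, x * y = y * x) ∧ (∀ x y z : G, (x * y) * z = x * (y * z)) := by
  rcases hc with hl | hr
  · -- left cancellation case
    have A : ∀ z w x y : G, z * (w * (x * y)) = x * (y * (z * w)) := by
      intro z w x y
      calc z * (w * (x * y)) = ((x * y) * z) * w := (h (x * y) z w).symm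
        _ = (y * (z * x)) * w := by rw [h x y z]
        _ = (z * x) * (w * y) := h y (z * x) w
        _ = x * ((w * y) * z) := h z x (w * y)
        _ = x * (y * (z * w)) := by rw [h w y z]
    have B : ∀ w z y : G, w * (z * y) = y * (z * w) := fun w z y => hl z _ _ (A z w z y)
    have C : ∀ w y z : G, (w * y) * z = w * (z * y) :=
      fun w y z => (h w y z).trans (B y z w)
    have central : ∀ u w z : G, (u * w) * z = z * (u * w) := by
      intro u w z
      have e1 : (z * z) * (u * w) = z * ((u * w) * z) := h z z (u * w)
      have e2 : (z * z) * (u * w) = z * (z * (u * w)) := by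
        calc (z * z) * (u * w) = w * (u * (z * z)) := (B w u (z * z)).symm
          _ = w * (z * (z * u)) := by rw [B z z u]
          _ = (z * u) * (z * w) := B w z (z * u)
          _ = z * ((z * w) * u) := C z u (z * w)
          _ = z * (z * (u * w)) := by rw [C z w u]
      exact hl z _ _ (e1.symm.trans e2)
    have comm : ∀ x y : G, x * y = y * x := by
      intro x y
      exact hl x _ _ ((h y x x).symm.trans (central y x x))
    refine ⟨comm, fun x y z => ?_⟩
    rw [C x y z, comm z y]
  · -- right cancellation case
    have C' : ∀ z x y : G, z * (x * y) = (x * z) * y := by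
      intro z x y
      have G : (z * (x * y)) * z = ((x * z) * y) * z := by
        calc (z * (x * y)) * z = (x * y) * (z * z) := h z (x * y) z
          _ = y * ((z * z) * x) := h x y (z * z)
          _ = y * (z * (x * z)) := by rw [h z z x]
          _ = ((x * z) * y) * z := (h (x * z) y z).symm
      exact hr z _ _ G
    have B' : ∀ X Y Z : G, (X * Y) * Z = (Z * Y) * X :=
      fun X Y Z => (h X Y Z).trans (C' Y Z X)
    have T : ∀ t x y : G, t * (x * y) = t * (y * x) :=
      fun t x y => (C' t x y).trans (h x t y)
    have S : ∀ x y : G, (x * x) * y = (y * x) * x := by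
      intro x y
      calc (x * x) * y = x * (x * y) := (C' x x y).symm
        _ = x * (y * x) := T x x y
        _ = (y * x) * x := C' x y x
    have Key : ∀ x y : G, (x * x) * (x * y) = (x * y) * (x * x) := by
      intro x y
      calc (x * x) * (x * y) = (x * x) * (y * x) := T (x * x) x y
        _ = ((y * x) * x) * x := B' x x (y * x)
        _ = ((x * x) * y) * x := by rw [S x y]
        _ = (x * y) * (x * x) := (B' x y (x * x)).symm
    have Com1 : ∀ x y : G, (x * y) * x = x * (x * y) := by
      intro x y
      apply hr x
      calc ((x * y) * x) * x = (y * (x * x)) * x := by rw [h x y x]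
        _ = (x * x) * (x * y) := h y (x * x) x
        _ = (x * y) * (x * x) := Key x y
        _ = ((x * x) * y) * x := B' x y (x * x)
        _ = (x * (x * y)) * x := by rw [← C' x x y]
    have comm : ∀ x y : G, x * y = y * x := by
      intro x y
      exact (hr x _ _ ((h y x x).trans (Com1 x y).symm)).symm
    refine ⟨comm, fun x y z => ?_⟩
    calc (x * y) * z = y * (z * x) := h x y z
      _ = (z * x) * y := comm y (z * x)
      _ = x * (y * z) := h z x y
end

section
/- Let F be the free groupoid on four generators x₁, x₂, x₃, x₄ satisfying (x*y)*z = y*(z*x), i.e., the quotient of FreeMagma(Fin 4) by the smallest multiplicative congruence containing all substitution instances of this identity. Then the classes of ((x₁*x₂)*x₃)*x₄ and ((x₂*x₁)*x₃)*x₄ in F are distinct. In particular, the identity (x*y)*z = y*(z*x) is not 4AC-nice: there is a magma satisfying it that is not 4AC-nice. -/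
/-- Substitution instances of the identity `(xy)z = y(zx)` in the free magma on four
generators: images of the pair `((x₁x₂)x₃, x₂(x₃x₁))` under magma homomorphisms
`FreeMagma (Fin 3) → FreeMagma (Fin 4)`. -/
def hRel (x y : FreeMagma (Fin 4)) : Prop :=
  ∃ σ : FreeMagma (Fin 3) →ₙ* FreeMagma (Fin 4),
    x = σ ((FreeMagma.of 0 * FreeMagma.of 1) * FreeMagma.of 2) ∧
    y = σ (FreeMagma.of 1 * (FreeMagma.of 2 * FreeMagma.of 0))

/-!
Every magma satisfying `(xy)z = y(zx)` is a quotient of the free groupoid through any choice of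
images of the generators, so two words are distinct in the free groupoid as soon as they differ in
one model. An eight-element nilpotent model separates `((ab)b)a` from `((ba)b)a`, which gives the
first claim for `x₁ ↦ a, x₂ ↦ b, x₃ ↦ b, x₄ ↦ a`. The free groupoid itself is then a magma
satisfying the identity that is not `4`AC-nice.
-/

theorem conGen_hRel_mk_ne_of_map_ne {M : Type*} [Mul M]
    (hM : ∀ x y z : M, x * y * z = y * (z * x)) (φ : FreeMagma (Fin 4) →ₙ* M)
    {u v : FreeMagma (Fin 4)} (h : φ u ≠ φ v) :
    Quotient.mk (conGen hRel).toSetoid u ≠ Quotient.mk (conGen hRel).toSetoid v := by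
  have hker : conGen hRel ≤ Con.ker φ := Con.conGen_le.2 <| by
    rintro _ _ ⟨σ, rfl, rfl⟩
    simp only [Con.ker_rel, map_mul]
    exact hM _ _ _
  exact fun huv => h (hker (Quotient.exact huv))

theorem conGen_hRel_quotient_mul_mul (x y z : (conGen hRel).Quotient) :
    x * y * z = y * (z * x) := by
  refine Con.induction_on₂ x y fun x y => Con.induction_on z fun z => ?_
  refine (conGen hRel).eq.2 (ConGen.Rel.of _ _ ⟨FreeMagma.lift ![x, y, z], ?_, ?_⟩) <;>
    simp [FreeMagma.lift_of]

theorem not_acNice_four_of_ne {G : Type*} [Mul G] {a b c d : G}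
    (h : a * b * c * d ≠ b * a * c * d) : ¬ ACnice G 4 := by
  intro hG
  let comb : Brack := .node (.node (.node .leaf .leaf) .leaf) .leaf
  have := hG (fun i => if hi : i < 4 then ![a, b, c, d] ⟨i, hi⟩ else a) comb comb rfl rfl
    1 (Equiv.swap 0 1)
  exact h <| by
    simpa [comb, Brack.eval, Brack.leaves, permNat, Equiv.swap_apply_of_ne_of_ne] using this

def Witness : Type := Fin 8

namespace Witness

instance : DecidableEq Witness := inferInstanceAs (DecidableEq (Fin 8))
instance : Fintype Witness := inferInstanceAs (Fintype (Fin 8))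
instance {n : ℕ} : OfNat Witness n := inferInstanceAs (OfNat (Fin 8) n)

/- `1, …, 7` stand for `a, b, ab, ba, (ab)b = b(ba), (ba)a = a(ab)` and a top element
annihilated by everything; `0` is absorbing. -/
instance : Mul Witness where
  mul : Fin 8 → Fin 8 → Fin 8
    | 1, 2 => 3 | 2, 1 => 4 | 3, 2 => 5 | 2, 4 => 5 | 4, 1 => 6 | 1, 3 => 6
    | 1, 5 => 7 | 2, 6 => 7 | 5, 1 => 7 | 6, 2 => 7 | 3, 4 => 7 | 4, 3 => 7
    | _, _ => 0

theorem mul_mul_eq (x y z : Witness) : x * y * z = y * (z * x) := by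
  revert x y z
  decide

end Witness

/-- In the free groupoid on four generators satisfying `(xy)z = y(zx)` (the quotient of
`FreeMagma (Fin 4)` by the smallest congruence containing all substitution instances of
this identity), the classes of `((x₁x₂)x₃)x₄` and `((x₂x₁)x₃)x₄` are distinct; in
particular, there is a magma satisfying `(xy)z = y(zx)` that is not `4`AC-nice. -/
theorem stmt16 :
    Quotient.mk (conGen hRel).toSetoid
        (((FreeMagma.of 0 * FreeMagma.of 1) * FreeMagma.of 2) * FreeMagma.of 3) ≠
      Quotient.mk (conGen hRel).toSetoid
        (((FreeMagma.of 1 * FreeMagma.of 0) * FreeMagma.of 2) * FreeMagma.of 3) ∧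
    ∃ (G : Type) (inst : Mul G),
      (∀ x y z : G, (x * y) * z = y * (z * x)) ∧ ¬@ACnice G inst 4 := by
  have hfree := conGen_hRel_mk_ne_of_map_ne Witness.mul_mul_eq
    (FreeMagma.lift (![1, 2, 2, 1] : Fin 4 → Witness))
    (u := ((FreeMagma.of 0 * FreeMagma.of 1) * FreeMagma.of 2) * FreeMagma.of 3)
    (v := ((FreeMagma.of 1 * FreeMagma.of 0) * FreeMagma.of 2) * FreeMagma.of 3) (by decide)
  refine ⟨hfree, (conGen hRel).Quotient, inferInstance, conGen_hRel_quotient_mul_mul, ?_⟩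
  let x (i : Fin 4) : (conGen hRel).Quotient := FreeMagma.of i
  exact not_acNice_four_of_ne (a := x 0) (b := x 1) (c := x 2) (d := x 3) hfree
end

section
/- Define a labelling function b on bracketings by: b(t) = 0 if t is a single leaf, and b(t) = (Σ_{i=1}^{m−1} Cᵢ·Cₙ₋ᵢ) + b(t_ρ)·Cₙ₋ₘ + b(t_λ) if t = t_λ·t_ρ has n leaves, where t_λ is the left subtree with n − m leaves and t_ρ is the right subtree with m leaves. Then for every n ≥ 1, the map t ↦ b(t) is a bijection from the set of bracketings with n leaves onto {0, 1, …, Cₙ − 1}. -/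
/-- The labelling of bracketings: `b(leaf) = 0` and, if `t = t_λ · t_ρ` has `n` leaves
with `t_ρ` having `m` leaves, `b(t) = Σ_{i=1}^{m−1} Cᵢ·Cₙ₋ᵢ + b(t_ρ)·Cₙ₋ₘ + b(t_λ)`,
where `Cⱼ = catalan (j − 1)` is the number of bracketings with `j` leaves. -/
def blabel : Brack → ℕ
  | .leaf => 0
  | .node l r =>
      (∑ i ∈ Finset.Ico 1 r.leaves,
        catalan (i - 1) * catalan (l.leaves + r.leaves - i - 1)) +
      blabel r * catalan (l.leaves - 1) + blabel l

/-! A bracketing with `n ≥ 2` leaves is `t_λ · t_ρ` with `1 ≤ m < n` leaves in `t_ρ`. For fixed `m`,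
by induction `b` is the offset `Σ_{i<m} Cᵢ·Cₙ₋ᵢ` plus the mixed-radix numeral
`b(t_ρ)·Cₙ₋ₘ + b(t_λ)` with digits `b(t_λ) < Cₙ₋ₘ` and `b(t_ρ) < Cₘ`, so it maps these trees onto an
interval of length `Cₘ·Cₙ₋ₘ`. Consecutive such intervals tile `[0, Cₙ)` by the Catalan recurrence. -/

open Set Function

theorem Set.BijOn.union_of_disjoint {α β : Type*} {f : α → β} {s₁ s₂ : Set α} {t₁ t₂ : Set β}
    (h₁ : BijOn f s₁ t₁) (h₂ : BijOn f s₂ t₂) (ht : Disjoint t₁ t₂) :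
    BijOn f (s₁ ∪ s₂) (t₁ ∪ t₂) := by
  refine h₁.union h₂ ?_
  rintro x (hx | hx) y (hy | hy) hxy
  · exact h₁.injOn hx hy hxy
  · exact (ht.ne_of_mem (h₁.mapsTo hx) (h₂.mapsTo hy) hxy).elim
  · exact (ht.ne_of_mem (h₁.mapsTo hy) (h₂.mapsTo hx) hxy.symm).elim
  · exact h₂.injOn hx hy hxy

theorem bijOn_biUnion_Ico_sum {α : Type*} {f : α → ℕ} {s : ℕ → Set α} {c : ℕ → ℕ} {a k : ℕ}
    (h : ∀ m ∈ Ico a k, BijOn f (s m)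
      (Ico (∑ i ∈ Finset.Ico a m, c i) (∑ i ∈ Finset.Ico a m, c i + c m))) :
    BijOn f (⋃ m ∈ Ico a k, s m) (Iio (∑ i ∈ Finset.Ico a k, c i)) := by
  induction k with
  | zero => simp
  | succ k ih =>
    rcases lt_or_ge k a with hk | hk
    · rw [Finset.Ico_eq_empty_of_le hk, Set.Ico_eq_empty_of_le hk]
      simp
    rw [Set.Ico_add_one_right_eq_Icc, ← Ico_insert_right hk, biUnion_insert,
      Finset.sum_Ico_succ_top hk, ← Iio_union_Ico_eq_Iio (Nat.le_add_right _ _), union_comm]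
    refine (ih fun m hm => h m ⟨hm.1, hm.2.trans k.lt_succ_self⟩).union_of_disjoint
      (h k ⟨hk, k.lt_succ_self⟩) ?_
    exact disjoint_left.2 fun x hx hx' => (not_lt.2 hx'.1) hx

theorem Nat.bijOn_add_mul (k m : ℕ) :
    BijOn (fun p : ℕ × ℕ => p.1 + p.2 * m) (Iio m ×ˢ Iio k) (Iio (k * m)) := by
  refine ⟨?_, ?_, ?_⟩
  · rintro ⟨a, b⟩ ⟨ha, hb⟩
    simp only [mem_Iio] at ha hb ⊢
    calc a + b * m < m + b * m := by omega
      _ = (b + 1) * m := by ring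
      _ ≤ k * m := Nat.mul_le_mul_right _ hb
  · rintro ⟨a, b⟩ ⟨ha, -⟩ ⟨a', b'⟩ ⟨ha', -⟩ h
    simp only [mem_Iio] at ha ha' h
    have hm : 0 < m := by omega
    have hb : b = b' := by
      simpa [Nat.add_mul_div_right _ _ hm, Nat.div_eq_of_lt ha, Nat.div_eq_of_lt ha']
        using congrArg (· / m) h
    subst hb
    rw [Nat.add_right_cancel h]
  · intro x hx
    have hm : 0 < m := Nat.pos_of_mul_pos_left (Nat.zero_lt_of_lt hx)
    refine ⟨(x % m, x / m), ⟨Nat.mod_lt _ hm, (Nat.div_lt_iff_lt_mul hm).2 hx⟩, ?_⟩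
    exact Nat.mod_add_div' x m

namespace Brack

theorem leaves_pos (t : Brack) : 0 < t.leaves := by
  induction t with
  | leaf => exact Nat.one_pos
  | node l r _ _ => exact Nat.add_pos_left ‹_› _

theorem leaves_eq_one_iff {t : Brack} : t.leaves = 1 ↔ t = leaf := by
  cases t with
  | leaf => simp [leaves]
  | node l r =>
    have := l.leaves_pos
    have := r.leaves_pos
    simp only [leaves, reduceCtorEq, iff_false]
    omega

theorem setOf_leaves_eq_biUnion {n : ℕ} (hn : n ≠ 1) :
    {t : Brack | t.leaves = n} =
      ⋃ m ∈ Ico 1 n, image2 node {t | t.leaves = n - m} {t | t.leaves = m} := by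
  ext t
  cases t with
  | leaf => simp [leaves, Ne.symm hn]
  | node l r =>
    have := l.leaves_pos
    have := r.leaves_pos
    simp only [leaves, mem_ofPred_eq, mem_iUnion, mem_image2, node.injEq, mem_Ico]
    constructor
    · rintro rfl
      exact ⟨r.leaves, ⟨by omega, by omega⟩, l, by omega, r, rfl, rfl, rfl⟩
    · rintro ⟨m, hm, l, hl, r, rfl, rfl, rfl⟩
      omega

end Brack

theorem sum_Ico_one_catalan_mul_catalan {n : ℕ} (hn : 2 ≤ n) :
    ∑ i ∈ Finset.Ico 1 n, catalan (i - 1) * catalan (n - i - 1) = catalan (n - 1) := by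
  obtain ⟨k, rfl⟩ : ∃ k, n = k + 2 := ⟨n - 2, by omega⟩
  rw [show k + 2 - 1 = k + 1 from rfl, catalan_succ', Finset.Nat.sum_antidiagonal_eq_sum_range_succ
    (fun i j => catalan i * catalan j), Finset.sum_Ico_eq_sum_range]
  refine Finset.sum_congr rfl fun j hj => ?_
  rw [Finset.mem_range] at hj
  congr 2 <;> omega

theorem bijOn_blabel_image2_node {n m : ℕ} (hmn : m ≤ n)
    (hl : BijOn blabel {t : Brack | t.leaves = n - m} (Iio (catalan (n - m - 1))))
    (hr : BijOn blabel {t : Brack | t.leaves = m} (Iio (catalan (m - 1)))) :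
    BijOn blabel (image2 Brack.node {t | t.leaves = n - m} {t | t.leaves = m})
      (Ico (∑ i ∈ Finset.Ico 1 m, catalan (i - 1) * catalan (n - i - 1))
        (∑ i ∈ Finset.Ico 1 m, catalan (i - 1) * catalan (n - i - 1) +
          catalan (m - 1) * catalan (n - m - 1))) := by
  set S := ∑ i ∈ Finset.Ico 1 m, catalan (i - 1) * catalan (n - i - 1)
  have hnode : InjOn (uncurry Brack.node) ({t | t.leaves = n - m} ×ˢ {t | t.leaves = m}) :=
    fun ⟨_, _⟩ _ ⟨_, _⟩ _ h => by obtain ⟨rfl, rfl⟩ := Brack.node.inj h; rfl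
  have hshift : BijOn (· + S) (Iio (catalan (m - 1) * catalan (n - m - 1)))
      (Ico S (S + catalan (m - 1) * catalan (n - m - 1))) := by
    simpa [add_comm, Set.Ico, Set.Iio] using Ico_add_bij 0 _ S
  rw [← image_uncurry_prod, ← bijOn_comp_iff hnode]
  refine (hshift.comp ((Nat.bijOn_add_mul _ _).comp (hl.prodMap hr))).congr ?_
  rintro ⟨l, r⟩ ⟨hl : l.leaves = n - m, hr : r.leaves = m⟩
  simp only [comp_apply, uncurry_apply_pair, blabel, hl, hr, Nat.sub_add_cancel hmn, S]
  ring

/-- For every `n ≥ 1`, the labelling `b` is a bijection from the bracketings with `n`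
leaves onto `{0, 1, …, Cₙ − 1}`. -/
theorem stmt18 (n : ℕ) (hn : 1 ≤ n) :
    Set.BijOn blabel {t : Brack | t.leaves = n} (Set.Iio (catalan (n - 1))) := by
  induction n using Nat.strong_induction_on with
  | _ n ih =>
  obtain rfl | hn2 : n = 1 ∨ 2 ≤ n := by omega
  · simp [Brack.leaves_eq_one_iff, blabel]
  rw [Brack.setOf_leaves_eq_biUnion (by omega), ← sum_Ico_one_catalan_mul_catalan hn2]
  exact bijOn_biUnion_Ico_sum fun m ⟨hm1, hmn⟩ =>
    bijOn_blabel_image2_node hmn.le (ih _ (by omega) (by omega)) (ih _ hmn hm1)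
end
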